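/- arXiv:0712.4296 — 2 statements merged into one kernel-verified Lean document; each statement's English description precedes it below -/
import Mathlib

section
/- The free Burnside group B(3,3) on three generators of exponent 3 is finite of order 3^7 = 2187. -/
/-!
In a group of exponent 3 one has `b * a * b = a⁻¹ * b⁻¹ * a⁻¹`, so every element commutes with
each of its conjugates and the normal closure of a single element is abelian. This yields the
2-Engel law (`⁅a, b⁆` commutes with `a` and `b`), the centrality in `B(3,3)` of the weight-three
commutator `C = ⁅X, ⁅Y, Z⁆⁆`, and the sign rule `⁅b, ⁅c, w⁆⁆ = ⁅c, ⁅b, w⁆⁆⁻¹`.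
With `U = ⁅X, Y⁆`, `V = ⁅X, Z⁆`, `W = ⁅Y, Z⁆`, left multiplication by a generator therefore
maps words `C ^ k * W ^ f * V ^ e * U ^ d * Z ^ c * Y ^ b * X ^ a` (exponents in `ZMod 3`) to words
of the same shape, so these `3 ^ 7` words exhaust `B(3,3)`. The collection formula is the
multiplication of a group of exponent 3 on `(ZMod 3) ^ 7`, onto which `B(3,3)` maps with the
normal form as a section; hence the two groups are isomorphic.
-/

/-- The free Burnside group `B(m, n)`: the quotient of the free group on `m`
generators by the normal closure of the set of `n`-th powers of all its
elements. -/
def BurnsideGroup (m n : ℕ) : Type :=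
  PresentedGroup {w : FreeGroup (Fin m) | ∃ x : FreeGroup (Fin m), w = x ^ n}

instance (m n : ℕ) : Group (BurnsideGroup m n) :=
  inferInstanceAs (Group (PresentedGroup _))

open scoped commutatorElement

section Commutator

variable {G : Type*} [Group G]

theorem commutatorElement_mem_normalClosure_left (a b : G) :
    ⁅a, b⁆ ∈ Subgroup.normalClosure {a} := by
  have ha : a ∈ Subgroup.normalClosure {a} := Subgroup.subset_normalClosure (Set.mem_singleton a)
  rw [show ⁅a, b⁆ = a * (b * a⁻¹ * b⁻¹) by rw [commutatorElement_def]; group]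
  exact mul_mem ha (Subgroup.normalClosure_normal.conj_mem _ (inv_mem ha) b)

theorem commutatorElement_mem_normalClosure_right (a b : G) :
    ⁅a, b⁆ ∈ Subgroup.normalClosure {b} := by
  have hb : b ∈ Subgroup.normalClosure {b} := Subgroup.subset_normalClosure (Set.mem_singleton b)
  rw [commutatorElement_def]
  exact mul_mem (Subgroup.normalClosure_normal.conj_mem _ hb a) (inv_mem hb)

theorem commutatorElement_pow_right {a b : G} (h : Commute ⁅a, b⁆ b) (n : ℕ) :
    ⁅a, b ^ n⁆ = ⁅a, b⁆ ^ n := by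
  calc ⁅a, b ^ n⁆ = (a * b * a⁻¹) ^ n * (b ^ n)⁻¹ := by rw [conj_pow, commutatorElement_def]
    _ = (⁅a, b⁆ * b) ^ n * (b ^ n)⁻¹ := by rw [commutatorElement_def, inv_mul_cancel_right]
    _ = ⁅a, b⁆ ^ n := by rw [h.mul_pow, mul_inv_cancel_right]

theorem conj_pow_eq_commutatorElement_pow_mul {a b : G} (h : Commute ⁅a, b⁆ b) (n : ℕ) :
    a * b ^ n * a⁻¹ = ⁅a, b⁆ ^ n * b ^ n := by
  rw [← commutatorElement_pow_right h, commutatorElement_def, inv_mul_cancel_right]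

theorem commutatorElement_pow_pow {a b : G} (ha : Commute ⁅a, b⁆ a) (hb : Commute ⁅a, b⁆ b)
    (m n : ℕ) : ⁅a ^ m, b ^ n⁆ = ⁅a, b⁆ ^ (m * n) := by
  have hba : Commute ⁅b, a⁆ a := by rwa [← commutatorElement_inv, Commute.inv_left_iff]
  have hm : ⁅a ^ m, b⁆ = ⁅a, b⁆ ^ m := by
    rw [← commutatorElement_inv, commutatorElement_pow_right hba, ← commutatorElement_inv, inv_pow,
      inv_inv]
  rw [commutatorElement_pow_right (hm ▸ hb.pow_left m), hm, pow_mul]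

end Commutator

section ExponentThree

variable {G : Type*} [Group G]

theorem commute_conj_self_of_pow_three (hG : ∀ g : G, g ^ 3 = 1) (x k : G) :
    Commute x (k * x * k⁻¹) := by
  have hbab : ∀ a b : G, b * a * b = a⁻¹ * b⁻¹ * a⁻¹ := fun a b => by
    calc b * a * b = a⁻¹ * (a * b * (a * b * (a * b))) * b⁻¹ * a⁻¹ := by group
      _ = a⁻¹ * b⁻¹ * a⁻¹ := by rw [← pow_three, hG]; group
  have hk : k * k = k⁻¹ := by
    calc k * k = k * (k * k) * k⁻¹ := by group
      _ = k⁻¹ := by rw [← pow_three, hG, one_mul]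
  calc x * (k * x * k⁻¹) = x * k * x * k⁻¹ := by group
    _ = k⁻¹ * x⁻¹ * (k * k)⁻¹ := by rw [hbab]; group
    _ = k * k * x⁻¹ * k := by rw [hk]; group
    _ = k * (x * k⁻¹ * x) := by rw [hbab k⁻¹ x, inv_inv]; group
    _ = k * x * k⁻¹ * x := by group

theorem commute_of_mem_normalClosure_of_pow_three (hG : ∀ g : G, g ^ 3 = 1) {x a b : G}
    (ha : a ∈ Subgroup.normalClosure {x}) (hb : b ∈ Subgroup.normalClosure {x}) :
    Commute a b := by
  have hconj : ∀ y ∈ Group.conjugatesOfSet {x}, ∀ z ∈ Group.conjugatesOfSet {x},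
      y * z = z * y := by
    simp only [Group.mem_conjugatesOfSet_iff, Set.mem_singleton_iff, exists_eq_left, isConj_iff]
    rintro _ ⟨g, rfl⟩ _ ⟨h, rfl⟩
    simpa [mul_assoc] using ((commute_conj_self_of_pow_three hG x (g⁻¹ * h)).conj g).eq
  have hle := Subgroup.closure_le_centralizer_centralizer (Group.conjugatesOfSet {x})
  exact Set.centralizer_centralizer_comm_of_comm hconj a (hle ha) b (hle hb)

theorem commute_commutatorElement_left_of_pow_three (hG : ∀ g : G, g ^ 3 = 1) (a b : G) :
    Commute ⁅a, b⁆ a :=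
  commute_of_mem_normalClosure_of_pow_three hG (commutatorElement_mem_normalClosure_left a b)
    (Subgroup.subset_normalClosure (Set.mem_singleton a))

theorem commute_commutatorElement_right_of_pow_three (hG : ∀ g : G, g ^ 3 = 1) (a b : G) :
    Commute ⁅a, b⁆ b :=
  commute_of_mem_normalClosure_of_pow_three hG (commutatorElement_mem_normalClosure_right a b)
    (Subgroup.subset_normalClosure (Set.mem_singleton b))

theorem commute_commutatorElement_of_mem_normalClosure_of_pow_three (hG : ∀ g : G, g ^ 3 = 1)
    {t u : G} (hu : u ∈ Subgroup.normalClosure {t}) (z : G) : Commute ⁅z, u⁆ t := by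
  have hut : t * u * t⁻¹ = u := (commute_of_mem_normalClosure_of_pow_three hG
    (Subgroup.subset_normalClosure (Set.mem_singleton t)) hu).mul_inv_cancel
  have hsu : Commute ⁅t, z⁆ u :=
    commute_of_mem_normalClosure_of_pow_three hG (commutatorElement_mem_normalClosure_left t z) hu
  have hs : ⁅t, z⁆ * ⁅z, u⁆ * ⁅t, z⁆⁻¹ = ⁅z, u⁆ :=
    (commute_of_mem_normalClosure_of_pow_three hG (commutatorElement_mem_normalClosure_right t z)
      (commutatorElement_mem_normalClosure_left z u)).mul_inv_cancel
  have htz : t * z * t⁻¹ = ⁅t, z⁆ * z := by rw [commutatorElement_def]; group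
  refine (mul_inv_eq_iff_eq_mul.mp ?_).symm
  rw [conjugate_commutatorElement, hut, htz, ← hs]
  generalize ⁅t, z⁆ = s at hsu
  have hsu' : s⁻¹ * u⁻¹ = u⁻¹ * s⁻¹ := hsu.inv_inv.eq
  simp only [commutatorElement_def, mul_inv_rev, mul_assoc, hsu']

theorem commutatorElement_commutatorElement_mul_swap_of_pow_three (hG : ∀ g : G, g ^ 3 = 1)
    (b c w : G) : ⁅b, ⁅c, w⁆⁆ * ⁅c, ⁅b, w⁆⁆ = 1 := by
  have hPc := commute_commutatorElement_left_of_pow_three hG c w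
  have hQb := commute_commutatorElement_left_of_pow_three hG b w
  have hβb := commute_commutatorElement_left_of_pow_three hG b ⁅c, w⁆
  have hβc := commute_commutatorElement_of_mem_normalClosure_of_pow_three hG
    (commutatorElement_mem_normalClosure_left c w) b
  have hβw := commute_commutatorElement_of_mem_normalClosure_of_pow_three hG
    (commutatorElement_mem_normalClosure_right c w) b
  have hRb := commute_commutatorElement_of_mem_normalClosure_of_pow_three hG
    (commutatorElement_mem_normalClosure_left b w) c
  have hβP : Commute ⁅b, ⁅c, w⁆⁆ ⁅c, w⁆ := by
    rw [commutatorElement_def c w]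
    exact ((hβc.mul_right hβw).mul_right hβc.inv_right).mul_right hβw.inv_right
  have hP : b * ⁅c, w⁆ * b⁻¹ = ⁅b, ⁅c, w⁆⁆ * ⁅c, w⁆ := by
    rw [commutatorElement_def _ ⁅c, w⁆]; group
  have hQ : c * ⁅b, w⁆ * c⁻¹ = ⁅c, ⁅b, w⁆⁆ * ⁅b, w⁆ := by
    rw [commutatorElement_def _ ⁅b, w⁆]; group
  have hD := (commute_commutatorElement_left_of_pow_three hG (b * c) w).symm.mul_inv_cancel
  rw [commutatorElement_mul_left_eq_conj_mul, hP] at hD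
  generalize ⁅b, ⁅c, w⁆⁆ = β at *
  generalize ⁅c, ⁅b, w⁆⁆ = R at *
  generalize ⁅c, w⁆ = P at *
  generalize ⁅b, w⁆ = Q at *
  -- conjugation by `b * c` fixes `⁅b * c, w⁆ = β * P * Q` (2-Engel) but moves each factor
  have hconj : (b * c) * (β * P * Q) * (b * c)⁻¹ = β * (β * P) * (R * Q) := by
    calc (b * c) * (β * P * Q) * (b * c)⁻¹
        = (b * c) * β * (b * c)⁻¹ * (b * (c * P * c⁻¹) * b⁻¹) * (b * (c * Q * c⁻¹) * b⁻¹) := by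
          group
      _ = β * (β * P) * (R * Q) := by
          rw [(hβb.mul_right hβc).symm.mul_inv_cancel, hPc.symm.mul_inv_cancel, hP, hQ,
            (hRb.mul_left hQb).symm.mul_inv_cancel]
  rw [hD] at hconj
  calc β * R = Q * ((β * P * Q)⁻¹ * (β * (P * β) * (R * Q))) * Q⁻¹ := by group
    _ = 1 := by rw [← hβP.eq, ← hconj]; group

end ExponentThree

theorem pow_val_add {M : Type*} [Monoid M] {n : ℕ} [NeZero n] {t : M} (ht : t ^ n = 1)
    (a b : ZMod n) : t ^ (a + b).val = t ^ a.val * t ^ b.val := by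
  rw [ZMod.val_add, ← pow_eq_pow_mod _ ht, pow_add]

theorem pow_val_mul {M : Type*} [Monoid M] {n : ℕ} [NeZero n] {t : M} (ht : t ^ n = 1)
    (a b : ZMod n) : t ^ (a * b).val = (t ^ a.val) ^ b.val := by
  rw [ZMod.val_mul, ← pow_eq_pow_mod _ ht, pow_mul]

namespace BurnsideGroup

variable {m n : ℕ}

theorem pow_eq_one (g : BurnsideGroup m n) : g ^ n = 1 := by
  obtain ⟨w, rfl⟩ := PresentedGroup.mk_surjective _ g
  exact (map_pow _ w n).symm.trans (PresentedGroup.one_of_mem ⟨w, rfl⟩)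

def of (i : Fin m) : BurnsideGroup m n := PresentedGroup.of i

theorem closure_range_of : Subgroup.closure (Set.range (of (m := m) (n := n))) = ⊤ :=
  PresentedGroup.closure_range_of _

def lift {G : Type*} [Group G] (hG : ∀ g : G, g ^ n = 1) (f : Fin m → G) :
    BurnsideGroup m n →* G :=
  PresentedGroup.toGroup (f := f) (by rintro _ ⟨w, rfl⟩; rw [map_pow]; exact hG _)

theorem lift_of {G : Type*} [Group G] (hG : ∀ g : G, g ^ n = 1) (f : Fin m → G) (i : Fin m) :
    lift hG f (of i) = f i :=
  PresentedGroup.toGroup.of (f := f) _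

end BurnsideGroup

namespace B33

/-- Coordinates are the exponents of the normal form
`C ^ k * W ^ f * V ^ e * U ^ d * Z ^ c * Y ^ b * X ^ a` in `B(3,3)` (below), and `mul` is the
result of collecting a product of two such words back into that form. -/
@[ext]
structure Model where
  a : ZMod 3
  b : ZMod 3
  c : ZMod 3
  d : ZMod 3
  e : ZMod 3
  f : ZMod 3
  k : ZMod 3
  deriving DecidableEq

namespace Model

@[simps] def mul (g h : Model) : Model :=
  ⟨g.a + h.a, g.b + h.b, g.c + h.c, g.d + h.d + g.a * h.b, g.e + h.e + g.a * h.c,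
    g.f + h.f + g.b * h.c,
    g.k + h.k + g.a * h.f + 2 * g.b * h.e + g.c * h.d + g.a * h.b * h.c + 2 * g.a * g.b * h.c
      + g.a * g.c * h.b⟩

@[simps] def inv (g : Model) : Model :=
  ⟨-g.a, -g.b, -g.c, -g.d + g.a * g.b, -g.e + g.a * g.c, -g.f + g.b * g.c,
    -g.k + g.a * g.f - g.b * g.e + g.c * g.d + g.a * g.b * g.c⟩

instance : Mul Model := ⟨mul⟩
instance : Inv Model := ⟨inv⟩
instance : One Model := ⟨⟨0, 0, 0, 0, 0, 0, 0⟩⟩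

theorem mul_def (g h : Model) : g * h = mul g h := rfl
theorem inv_def (g : Model) : g⁻¹ = inv g := rfl
theorem one_def : (1 : Model) = ⟨0, 0, 0, 0, 0, 0, 0⟩ := rfl

instance : Group Model := Group.ofLeftAxioms
  (fun _ _ _ => by ext <;> simp [mul_def] <;> ring)
  (fun _ => by ext <;> simp [mul_def, one_def])
  (fun _ => by ext <;> simp [mul_def, inv_def, one_def]; ring_nf; reduce_mod_char)

theorem pow_three_eq_one (g : Model) : g ^ 3 = 1 := by
  ext <;> simp [pow_succ, mul_def, one_def] <;> ring_nf <;> reduce_mod_char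

def x : Model := ⟨1, 0, 0, 0, 0, 0, 0⟩
def y : Model := ⟨0, 1, 0, 0, 0, 0, 0⟩
def z : Model := ⟨0, 0, 1, 0, 0, 0, 0⟩

theorem pow_val_generators (s : ZMod 3) :
    x ^ s.val = ⟨s, 0, 0, 0, 0, 0, 0⟩ ∧ y ^ s.val = ⟨0, s, 0, 0, 0, 0, 0⟩ ∧
      z ^ s.val = ⟨0, 0, s, 0, 0, 0, 0⟩ ∧ ⁅x, y⁆ ^ s.val = ⟨0, 0, 0, s, 0, 0, 0⟩ ∧
      ⁅x, z⁆ ^ s.val = ⟨0, 0, 0, 0, s, 0, 0⟩ ∧ ⁅y, z⁆ ^ s.val = ⟨0, 0, 0, 0, 0, s, 0⟩ ∧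
      ⁅x, ⁅y, z⁆⁆ ^ s.val = ⟨0, 0, 0, 0, 0, 0, s⟩ := by
  revert s; decide

def equivProd : Model ≃ ZMod 3 × ZMod 3 × ZMod 3 × ZMod 3 × ZMod 3 × ZMod 3 × ZMod 3 where
  toFun g := (g.a, g.b, g.c, g.d, g.e, g.f, g.k)
  invFun p := ⟨p.1, p.2.1, p.2.2.1, p.2.2.2.1, p.2.2.2.2.1, p.2.2.2.2.2.1, p.2.2.2.2.2.2⟩
  left_inv _ := rfl
  right_inv _ := rfl

instance : Finite Model := Finite.of_equiv _ equivProd.symm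

theorem card_eq : Nat.card Model = 3 ^ 7 := by
  simp [Nat.card_congr equivProd]

end Model

def X : BurnsideGroup 3 3 := BurnsideGroup.of 0
def Y : BurnsideGroup 3 3 := BurnsideGroup.of 1
def Z : BurnsideGroup 3 3 := BurnsideGroup.of 2
def U : BurnsideGroup 3 3 := ⁅X, Y⁆
def V : BurnsideGroup 3 3 := ⁅X, Z⁆
def W : BurnsideGroup 3 3 := ⁅Y, Z⁆
def C : BurnsideGroup 3 3 := ⁅X, W⁆

theorem commute_C (g : BurnsideGroup 3 3) : Commute C g := by
  have hG := BurnsideGroup.pow_eq_one (m := 3) (n := 3)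
  have hgen :
      Set.range BurnsideGroup.of ⊆ (Subgroup.centralizer {C} : Set (BurnsideGroup 3 3)) := by
    rintro _ ⟨i, rfl⟩
    rw [SetLike.mem_coe, Subgroup.mem_centralizer_singleton_iff]
    fin_cases i
    · exact (commute_commutatorElement_left_of_pow_three hG X W).eq.symm
    · exact (commute_commutatorElement_of_mem_normalClosure_of_pow_three hG
        (commutatorElement_mem_normalClosure_left Y Z) X).eq.symm
    · exact (commute_commutatorElement_of_mem_normalClosure_of_pow_three hG
        (commutatorElement_mem_normalClosure_right Y Z) X).eq.symm
  have hg : g ∈ Subgroup.centralizer {C} :=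
    (Subgroup.closure_le _).mpr hgen (BurnsideGroup.closure_range_of ▸ Subgroup.mem_top g)
  exact (Subgroup.mem_centralizer_singleton_iff.mp hg).symm

theorem commute_U_V : Commute U V :=
  commute_of_mem_normalClosure_of_pow_three BurnsideGroup.pow_eq_one
    (commutatorElement_mem_normalClosure_left X Y) (commutatorElement_mem_normalClosure_left X Z)

theorem commute_U_W : Commute U W :=
  commute_of_mem_normalClosure_of_pow_three BurnsideGroup.pow_eq_one
    (commutatorElement_mem_normalClosure_right X Y) (commutatorElement_mem_normalClosure_left Y Z)

theorem commute_V_W : Commute V W :=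
  commute_of_mem_normalClosure_of_pow_three BurnsideGroup.pow_eq_one
    (commutatorElement_mem_normalClosure_right X Z) (commutatorElement_mem_normalClosure_right Y Z)

theorem commutatorElement_Y_V : ⁅Y, V⁆ = C ^ 2 := by
  have hC : C⁻¹ = C ^ 2 :=
    inv_eq_of_mul_eq_one_right (by rw [← pow_succ']; exact BurnsideGroup.pow_eq_one C)
  rw [← hC]
  exact eq_inv_of_mul_eq_one_right
    (commutatorElement_commutatorElement_mul_swap_of_pow_three BurnsideGroup.pow_eq_one X Y Z)

theorem commutatorElement_Z_U : ⁅Z, U⁆ = C := by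
  have hXW : ⁅X, W⁻¹⁆ = C⁻¹ := by
    rw [commutatorElement_inv_right, ← commutatorElement_inv]
    exact (commute_C W).inv_left.symm.inv_mul_cancel
  have h := commutatorElement_commutatorElement_mul_swap_of_pow_three BurnsideGroup.pow_eq_one X Z Y
  rw [← commutatorElement_inv Y Z] at h
  change ⁅X, W⁻¹⁆ * ⁅Z, U⁆ = 1 at h
  rw [hXW] at h
  rw [eq_inv_of_mul_eq_one_right h, inv_inv]

def commutatorPart (d e f k : ZMod 3) : BurnsideGroup 3 3 :=
  C ^ k.val * W ^ f.val * V ^ e.val * U ^ d.val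

theorem commutatorPart_mul (d e f k d' e' f' k' : ZMod 3) :
    commutatorPart d e f k * commutatorPart d' e' f' k' =
      commutatorPart (d + d') (e + e') (f + f') (k + k') := by
  have hC : ∀ (g : BurnsideGroup 3 3) (n : ℕ), Commute g (C ^ n) :=
    fun g n => ((commute_C g).pow_left n).symm
  simp only [commutatorPart, pow_val_add (BurnsideGroup.pow_eq_one _), mul_assoc]
  rw [(hC (U ^ d.val) _).left_comm, (hC (V ^ e.val) _).left_comm, (hC (W ^ f.val) _).left_comm,
    (commute_U_W.pow_pow _ _).left_comm, (commute_V_W.pow_pow _ _).left_comm,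
    (commute_U_V.pow_pow _ _).left_comm]

theorem commutatorPart_pow (d e f k : ZMod 3) (n : ℕ) :
    commutatorPart d e f k ^ n = commutatorPart (n * d) (n * e) (n * f) (n * k) := by
  induction n with
  | zero => simp [commutatorPart]
  | succ n ih => rw [pow_succ, ih, commutatorPart_mul]; congr 1 <;> push_cast <;> ring

theorem conj_commutatorPart {t : BurnsideGroup 3 3} {p q r : ZMod 3} (hU : ⁅t, U⁆ = C ^ p.val)
    (hV : ⁅t, V⁆ = C ^ q.val) (hW : ⁅t, W⁆ = C ^ r.val) (d e f k : ZMod 3) :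
    t * commutatorPart d e f k * t⁻¹ = commutatorPart d e f (k + p * d + q * e + r * f) := by
  have hval : (1 : ZMod 3).val = 1 := rfl
  have hC : MulAut.conj t C = commutatorPart 0 0 0 1 := by
    simp [commutatorPart, hval, MulAut.conj_apply, (commute_C t).symm.mul_inv_cancel]
  have hW' : MulAut.conj t W = commutatorPart 0 0 1 r := by
    rw [conj_eq_commutatorElement_mul, hW]; simp [commutatorPart, hval]
  have hV' : MulAut.conj t V = commutatorPart 0 1 0 q := by
    rw [conj_eq_commutatorElement_mul, hV]; simp [commutatorPart, hval]
  have hU' : MulAut.conj t U = commutatorPart 1 0 0 p := by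
    rw [conj_eq_commutatorElement_mul, hU]; simp [commutatorPart, hval]
  rw [← MulAut.conj_apply, commutatorPart]
  simp only [map_mul, map_pow, hC, hW', hV', hU', commutatorPart_pow, commutatorPart_mul,
    ZMod.natCast_zmod_val]
  congr 1 <;> ring

theorem Z_pow_mul_U_pow (c b : ZMod 3) :
    Z ^ c.val * U ^ b.val = commutatorPart b 0 0 (c * b) * Z ^ c.val := by
  have h := commutatorElement_pow_pow (commutatorElement_Z_U ▸ commute_C Z)
    (commutatorElement_Z_U ▸ commute_C U) c.val b.val
  rw [commutatorElement_Z_U] at h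
  rw [commutatorPart, pow_val_mul (BurnsideGroup.pow_eq_one C), ← pow_mul, ← h]
  simp [commutatorElement_def]

def normalForm (g : Model) : BurnsideGroup 3 3 :=
  commutatorPart g.d g.e g.f g.k * Z ^ g.c.val * Y ^ g.b.val * X ^ g.a.val

theorem X_mul_normalForm (g : Model) : X * normalForm g = normalForm (Model.x * g) := by
  have hG := BurnsideGroup.pow_eq_one (m := 3) (n := 3)
  have hx : Model.x * g =
      ⟨1 + g.a, g.b, g.c, g.d + g.b, g.e + g.c, g.f, g.k + g.f + g.b * g.c⟩ := by
    ext <;> simp [Model.mul_def, Model.x]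
  have hXU : ⁅X, U⁆ = C ^ (0 : ZMod 3).val :=
    (commute_commutatorElement_left_of_pow_three hG X Y).symm.commutator_eq
  have hXV : ⁅X, V⁆ = C ^ (0 : ZMod 3).val :=
    (commute_commutatorElement_left_of_pow_three hG X Z).symm.commutator_eq
  have hXW : ⁅X, W⁆ = C ^ (1 : ZMod 3).val := (pow_one C).symm
  calc X * normalForm g
      = (X * commutatorPart g.d g.e g.f g.k * X⁻¹) * (X * Z ^ g.c.val * X⁻¹)
          * (X * Y ^ g.b.val * X⁻¹) * (X * X ^ g.a.val) := by simp only [normalForm]; group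
    _ = commutatorPart g.d g.e g.f (g.k + g.f) * V ^ g.c.val * (Z ^ g.c.val * U ^ g.b.val)
          * Y ^ g.b.val * X ^ (1 + g.a).val := by
        rw [conj_commutatorPart hXU hXV hXW,
          conj_pow_eq_commutatorElement_pow_mul
            (commute_commutatorElement_right_of_pow_three hG X Z),
          conj_pow_eq_commutatorElement_pow_mul
            (commute_commutatorElement_right_of_pow_three hG X Y),
          pow_val_add (hG X), show (1 : ZMod 3).val = 1 from rfl, pow_one]
        simp only [zero_mul, add_zero, one_mul, mul_assoc]
        rfl
    _ = normalForm (Model.x * g) := by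
        rw [Z_pow_mul_U_pow, hx, normalForm,
          show V ^ g.c.val = commutatorPart 0 g.c 0 0 by simp [commutatorPart]]
        simp only [← mul_assoc, commutatorPart_mul]
        ring_nf

theorem Y_mul_normalForm (g : Model) : Y * normalForm g = normalForm (Model.y * g) := by
  have hG := BurnsideGroup.pow_eq_one (m := 3) (n := 3)
  have hy : Model.y * g = ⟨g.a, 1 + g.b, g.c, g.d, g.e, g.f + g.c, g.k + 2 * g.e⟩ := by
    ext <;> simp [Model.mul_def, Model.y]
  have hYU : ⁅Y, U⁆ = C ^ (0 : ZMod 3).val :=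
    (commute_commutatorElement_right_of_pow_three hG X Y).symm.commutator_eq
  have hYW : ⁅Y, W⁆ = C ^ (0 : ZMod 3).val :=
    (commute_commutatorElement_left_of_pow_three hG Y Z).symm.commutator_eq
  calc Y * normalForm g
      = (Y * commutatorPart g.d g.e g.f g.k * Y⁻¹) * (Y * Z ^ g.c.val * Y⁻¹) * (Y * Y ^ g.b.val)
          * X ^ g.a.val := by simp only [normalForm]; group
    _ = normalForm (Model.y * g) := by
        rw [conj_commutatorPart hYU (q := 2) commutatorElement_Y_V hYW,
          conj_pow_eq_commutatorElement_pow_mul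
            (commute_commutatorElement_right_of_pow_three hG Y Z),
          hy, normalForm, pow_val_add (hG Y), show (1 : ZMod 3).val = 1 from rfl, pow_one,
          show ⁅Y, Z⁆ ^ g.c.val = commutatorPart 0 0 g.c 0 by simp [commutatorPart, W]]
        simp only [← mul_assoc, commutatorPart_mul]
        ring_nf

theorem Z_mul_normalForm (g : Model) : Z * normalForm g = normalForm (Model.z * g) := by
  have hG := BurnsideGroup.pow_eq_one (m := 3) (n := 3)
  have hz : Model.z * g = ⟨g.a, g.b, 1 + g.c, g.d, g.e, g.f, g.k + g.d⟩ := by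
    ext <;> simp [Model.mul_def, Model.z]
  have hZV : ⁅Z, V⁆ = C ^ (0 : ZMod 3).val :=
    (commute_commutatorElement_right_of_pow_three hG X Z).symm.commutator_eq
  have hZW : ⁅Z, W⁆ = C ^ (0 : ZMod 3).val :=
    (commute_commutatorElement_right_of_pow_three hG Y Z).symm.commutator_eq
  calc Z * normalForm g
      = (Z * commutatorPart g.d g.e g.f g.k * Z⁻¹) * (Z * Z ^ g.c.val) * Y ^ g.b.val
          * X ^ g.a.val := by simp only [normalForm]; group
    _ = normalForm (Model.z * g) := by
        rw [conj_commutatorPart (p := 1) commutatorElement_Z_U hZV hZW, hz, normalForm,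
          pow_val_add (hG Z), show (1 : ZMod 3).val = 1 from rfl, pow_one]
        ring_nf

theorem normalForm_surjective : Function.Surjective normalForm := by
  have hstep : ∀ i g, ∃ g', BurnsideGroup.of i * normalForm g = normalForm g' := by
    intro i g
    fin_cases i
    exacts [⟨_, X_mul_normalForm g⟩, ⟨_, Y_mul_normalForm g⟩, ⟨_, Z_mul_normalForm g⟩]
  intro h
  have hmem : h ∈ Subgroup.closure (Set.range BurnsideGroup.of) :=
    BurnsideGroup.closure_range_of ▸ Subgroup.mem_top h
  induction hmem using Subgroup.closure_induction_left with
  | one => exact ⟨1, by simp [normalForm, commutatorPart, Model.one_def]⟩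
  | mul_left s hs r _ ih =>
    obtain ⟨i, rfl⟩ := hs
    obtain ⟨g, rfl⟩ := ih
    obtain ⟨g', hg'⟩ := hstep i g
    exact ⟨g', hg'.symm⟩
  | inv_mul_cancel s hs r _ ih =>
    obtain ⟨i, rfl⟩ := hs
    obtain ⟨g, rfl⟩ := ih
    obtain ⟨g₁, hg₁⟩ := hstep i g
    obtain ⟨g₂, hg₂⟩ := hstep i g₁
    have hinv : (BurnsideGroup.of i)⁻¹ = BurnsideGroup.of i * BurnsideGroup.of i :=
      inv_eq_of_mul_eq_one_right (by rw [← pow_three]; exact BurnsideGroup.pow_eq_one _)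
    exact ⟨g₂, by rw [hinv, mul_assoc, hg₁, hg₂]⟩

def toModel : BurnsideGroup 3 3 →* Model :=
  BurnsideGroup.lift Model.pow_three_eq_one ![Model.x, Model.y, Model.z]

theorem toModel_normalForm (g : Model) : toModel (normalForm g) = g := by
  have hX : toModel X = Model.x := BurnsideGroup.lift_of _ _ 0
  have hY : toModel Y = Model.y := BurnsideGroup.lift_of _ _ 1
  have hZ : toModel Z = Model.z := BurnsideGroup.lift_of _ _ 2
  simp only [normalForm, commutatorPart, C, U, V, W, map_mul, map_pow, map_commutatorElement,
    hX, hY, hZ, Model.pow_val_generators]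
  ext <;> simp [Model.mul_def]

noncomputable def mulEquivModel : BurnsideGroup 3 3 ≃* Model :=
  MulEquiv.ofBijective toModel
    ⟨(Function.LeftInverse.rightInverse_of_surjective toModel_normalForm
        normalForm_surjective).injective,
      Function.LeftInverse.surjective toModel_normalForm⟩

end B33

theorem burnsideGroup_three_three_finite_card :
    Finite (BurnsideGroup 3 3) ∧ Nat.card (BurnsideGroup 3 3) = 3 ^ 7 :=
  ⟨Finite.of_equiv _ B33.mulEquivModel.symm.toEquiv,
    (Nat.card_congr B33.mulEquivModel.toEquiv).trans B33.Model.card_eq⟩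
end

section
/- Let n be a positive integer and let G be a subgroup of the group GL(n, ℂ) of invertible n×n complex matrices. If there exists a positive integer m such that g^m = 1 for every element g of G, then G is finite. -/
/-!
Every `g` with `g ^ m = 1` has eigenvalues among the `m`-th roots of unity, so its trace is a sum
of `n` of them and takes only finitely many values; moreover `tr g = n` forces all eigenvalues to
be `1`, so `g - 1` is nilpotent, and since `X ^ m - 1` is separable this gives `g = 1`. Choose a
basis `t ⊆ G` of the linear span of `G`. If `tr (g₁ x) = tr (g₂ x)` for all `x ∈ t`, then by
linearity for `x = g₂⁻¹` as well, so `tr (g₁ g₂⁻¹) = n` and `g₁ = g₂`. Hence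
`g ↦ (tr (g x))_{x ∈ t}` embeds `G` into a finite set.
-/

open Polynomial

theorem spectrum.pow_eq_one_of_pow_eq_one {𝕜 A : Type*} [Field 𝕜] [Ring A] [Algebra 𝕜 A]
    {a : A} {m : ℕ} (ha : a ^ m = 1) {k : 𝕜} (hk : k ∈ spectrum 𝕜 a) : k ^ m = 1 := by
  have : Nontrivial A := by
    by_contra h
    rw [not_nontrivial_iff_subsingleton] at h
    simp [spectrum.of_subsingleton] at hk
  simpa [ha, spectrum.one_eq] using spectrum.pow_mem_pow a m hk

theorem eq_one_of_isNilpotent_sub_one_of_pow_eq_one {K A : Type*} [Field K] [Ring A]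
    [Algebra K A] {a : A} {m : ℕ} (hm : (m : K) ≠ 0) (ha : a ^ m = 1)
    (hnil : IsNilpotent (a - 1)) : a = 1 := by
  obtain ⟨k, hk⟩ := hnil
  have hsqf : Squarefree (minpoly K a) :=
    (separable_X_pow_sub_C (1 : K) hm one_ne_zero).squarefree.squarefree_of_dvd
      (minpoly.dvd K a (by simp [ha]))
  have hdvd : minpoly K a ∣ X - C 1 :=
    hsqf.isRadical k _ (minpoly.dvd K a (by simp [hk]))
  simpa [sub_eq_zero] using minpoly.dvd_iff.mp hdvd

theorem Multiset.forall_eq_one_of_sum_eq_card {s : Multiset ℂ} (hs : ∀ z ∈ s, ‖z‖ ≤ 1)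
    (hsum : s.sum = s.card) : ∀ z ∈ s, z = 1 := by
  have hre : ∀ z ∈ s, z.re ≤ 1 := fun z hz => (Complex.re_le_norm z).trans (hs z hz)
  by_contra! ⟨z, hz, hz1⟩
  have hlt : z.re < 1 := by
    refine (hre z hz).lt_of_ne fun hz_re => hz1 ?_
    have hnorm : |z.re| = ‖z‖ := by
      rw [hz_re, abs_one]
      exact le_antisymm (hz_re ▸ Complex.re_le_norm z) (hs z hz)
    exact Complex.ext hz_re (Complex.abs_re_eq_norm.mp hnorm)
  have := Multiset.sum_lt_sum (f := Complex.re) (g := fun _ => 1) hre ⟨z, hz, hlt⟩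
  have hsum_re : (s.map Complex.re).sum = s.card := by
    rw [← Complex.natCast_re, ← hsum]
    exact (map_multiset_sum Complex.reAddGroupHom s).symm
  simp [hsum_re] at this

namespace Matrix

variable {ι K : Type*} [Fintype ι] [DecidableEq ι] [Field K]

theorem card_roots_charpoly [IsAlgClosed K] (A : Matrix ι ι K) :
    A.charpoly.roots.card = Fintype.card ι := by
  rw [IsAlgClosed.card_roots_eq_natDegree, charpoly_natDegree_eq_dim]

theorem pow_eq_one_of_mem_roots_charpoly {A : Matrix ι ι K} {m : ℕ} (hA : A ^ m = 1) {μ : K}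
    (hμ : μ ∈ A.charpoly.roots) : μ ^ m = 1 :=
  spectrum.pow_eq_one_of_pow_eq_one hA
    (mem_spectrum_iff_isRoot_charpoly.mpr (isRoot_of_mem_roots hμ))

theorem isNilpotent_sub_one_of_forall_mem_roots_charpoly [IsAlgClosed K] {A : Matrix ι ι K}
    (h : ∀ μ ∈ A.charpoly.roots, μ = 1) : IsNilpotent (A - 1) := by
  have hroots : A.charpoly.roots = Multiset.replicate (Fintype.card ι) 1 :=
    Multiset.eq_replicate.mpr ⟨A.card_roots_charpoly, h⟩
  have hcharpoly : A.charpoly = (X - C 1) ^ Fintype.card ι := by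
    rw [(IsAlgClosed.splits _).eq_prod_roots_of_monic A.charpoly_monic, hroots]
    simp
  refine ⟨Fintype.card ι, ?_⟩
  simpa [hcharpoly] using A.aeval_self_charpoly

theorem trace_mem_image_sum_sym_nthRootsFinset [IsAlgClosed K] [DecidableEq K]
    {A : Matrix ι ι K} {m : ℕ} (hm : 0 < m) (hA : A ^ m = 1) :
    A.trace ∈ ((nthRootsFinset m (1 : K)).sym (Fintype.card ι)).image
      fun s : Sym K (Fintype.card ι) => (s : Multiset K).sum := by
  refine Finset.mem_image.mpr
    ⟨⟨A.charpoly.roots, A.card_roots_charpoly⟩, ?_, (trace_eq_sum_roots_charpoly A).symm⟩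
  exact Finset.mem_sym_iff.mpr fun μ hμ =>
    (mem_nthRootsFinset hm 1).mpr (pow_eq_one_of_mem_roots_charpoly hA hμ)

theorem eq_one_of_pow_eq_one_of_trace_eq_card {A : Matrix ι ι ℂ} {m : ℕ} (hm : m ≠ 0)
    (hA : A ^ m = 1) (htrace : A.trace = Fintype.card ι) : A = 1 := by
  have hroots : ∀ μ ∈ A.charpoly.roots, μ = 1 := by
    refine Multiset.forall_eq_one_of_sum_eq_card (fun μ hμ =>
      (Complex.norm_eq_one_of_pow_eq_one (pow_eq_one_of_mem_roots_charpoly hA hμ) hm).le) ?_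
    rw [← trace_eq_sum_roots_charpoly, htrace, card_roots_charpoly]
  exact eq_one_of_isNilpotent_sub_one_of_pow_eq_one (K := ℂ) (Nat.cast_ne_zero.mpr hm) hA
    (isNilpotent_sub_one_of_forall_mem_roots_charpoly hroots)

end Matrix

namespace Matrix.GeneralLinearGroup

variable {ι K : Type*} [Fintype ι] [DecidableEq ι] [Field K]

theorem eq_of_forall_trace_mul_eq {G : Subgroup (GL ι K)}
    (hG : ∀ g ∈ G, (g : Matrix ι ι K).trace = Fintype.card ι → g = 1) {g₁ g₂ : GL ι K}
    (hg₁ : g₁ ∈ G) (hg₂ : g₂ ∈ G)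
    (h : ∀ g ∈ G,
      ((g₁ * g : GL ι K) : Matrix ι ι K).trace = ((g₂ * g : GL ι K) : Matrix ι ι K).trace) :
    g₁ = g₂ := by
  have := h _ (G.inv_mem hg₂)
  rw [mul_inv_cancel, Units.val_one, trace_one] at this
  exact mul_inv_eq_one.mp (hG _ (G.mul_mem hg₁ (G.inv_mem hg₂)) this)

theorem finite_of_finite_range_trace (G : Subgroup (GL ι K))
    (hfin : (Set.range fun g : G => ((g : GL ι K) : Matrix ι ι K).trace).Finite)
    (hG : ∀ g ∈ G, (g : Matrix ι ι K).trace = Fintype.card ι → g = 1) : Finite G := by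
  set T := Set.range fun g : G => ((g : GL ι K) : Matrix ι ι K).trace
  obtain ⟨t, htG, hspan, hli⟩ :=
    exists_linearIndependent K (Set.range fun g : G => ((g : GL ι K) : Matrix ι ι K))
  have : Finite t := hli.setFinite.to_subtype
  have : Finite T := hfin.to_subtype
  have hmem : ∀ (g : G) (x : t), ((g : GL ι K) * (x : Matrix ι ι K)).trace ∈ T := by
    rintro g ⟨x, hx⟩
    obtain ⟨k, rfl⟩ := htG hx
    exact ⟨g * k, rfl⟩
  refine Finite.of_injective (fun (g : G) (x : t) => (⟨_, hmem g x⟩ : T)) fun g₁ g₂ h => ?_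
  let traceMulLeft (g : G) : Matrix ι ι K →ₗ[K] K :=
    traceLinearMap ι K K ∘ₗ LinearMap.mulLeft K ((g : GL ι K) : Matrix ι ι K)
  have hspan_eq : ∀ x ∈ Submodule.span K t, traceMulLeft g₁ x = traceMulLeft g₂ x :=
    LinearMap.eqOn_span fun x hx => congrArg Subtype.val (congrFun h ⟨x, hx⟩)
  refine Subtype.ext (eq_of_forall_trace_mul_eq hG g₁.2 g₂.2 fun g hg => ?_)
  rw [Units.val_mul, Units.val_mul]
  exact hspan_eq _ (hspan ▸ Submodule.subset_span ⟨⟨g, hg⟩, rfl⟩)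

end Matrix.GeneralLinearGroup

theorem subgroup_GL_complex_bounded_exponent_finite_general (n : ℕ)
    (G : Subgroup (GL (Fin n) ℂ))
    (h : ∃ m : ℕ, 0 < m ∧ ∀ g ∈ G, g ^ m = 1) :
    Finite G := by
  obtain ⟨m, hm, hpow⟩ := h
  have hpow_matrix : ∀ g ∈ G, ((g : GL (Fin n) ℂ) : Matrix (Fin n) (Fin n) ℂ) ^ m = 1 :=
    fun g hg => by rw [← Units.val_pow_eq_pow_val, hpow g hg, Units.val_one]
  refine Matrix.GeneralLinearGroup.finite_of_finite_range_trace G ?_ fun g hg htrace =>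
    Units.ext (Matrix.eq_one_of_pow_eq_one_of_trace_eq_card hm.ne' (hpow_matrix g hg) htrace)
  exact (Finset.finite_toSet _).subset (Set.range_subset_iff.mpr fun g =>
    Matrix.trace_mem_image_sum_sym_nthRootsFinset hm (hpow_matrix g g.2))

theorem subgroup_GL_complex_bounded_exponent_finite (n : ℕ) (hn : 0 < n)
    (G : Subgroup (GL (Fin n) ℂ))
    (h : ∃ m : ℕ, 0 < m ∧ ∀ g ∈ G, g ^ m = 1) :
    Finite G :=
  subgroup_GL_complex_bounded_exponent_finite_general n G h
end
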